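/- Let P be a program over 𝒰 satisfying Δʳ for A, B ⊆ 𝒰, and let A′ = A ∩ B. Then SE^{𝒰 ∖ A′, B ∖ A}(P_{|𝒰 ∖ A′}) = SE^B(P)_{|𝒰 ∖ A′} = SE^B_{A′}(P). -/
import Mathlib


/-- An extended rule over a type of atoms: head, positive body, negative body,
double-negated body. -/
structure ASPRule (Atom : Type) where
  head : Finset Atom
  pos : Finset Atom
  neg : Finset Atom
  nneg : Finset Atom
deriving DecidableEq

/-- A program is a finite set of rules. -/
abbrev ASPProgram (Atom : Type) [DecidableEq Atom] := Finset (ASPRule Atom)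

section Defs

variable {Atom : Type} [DecidableEq Atom] [Fintype Atom]

/-- A rule is over `S` if all its atoms lie in `S`. -/
def ruleOver (r : ASPRule Atom) (S : Finset Atom) : Prop :=
  r.head ⊆ S ∧ r.pos ⊆ S ∧ r.neg ⊆ S ∧ r.nneg ⊆ S

/-- A program is over `S` if all its rules are over `S`. -/
def progOver (P : ASPProgram Atom) (S : Finset Atom) : Prop :=
  ∀ r ∈ P, ruleOver r S

/-- `I` satisfies (is a model of) rule `r`. -/
def satRule (I : Finset Atom) (r : ASPRule Atom) : Prop :=
  ((r.head ∪ r.neg) ∩ I).Nonempty ∨ ¬ (r.pos ∪ r.nneg ⊆ I)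

/-- `I` is a model of program `P`. -/
def sat (I : Finset Atom) (P : ASPProgram Atom) : Prop :=
  ∀ r ∈ P, satRule I r

/-- The GL-reduct `P^I`. -/
def reduct (P : ASPProgram Atom) (I : Finset Atom) : ASPProgram Atom :=
  (P.filter (fun r => r.neg ∩ I = ∅ ∧ r.nneg ⊆ I)).image
    (fun r => ⟨r.head, r.pos, ∅, ∅⟩)

/-- The answer sets of `P`: minimal models of the reduct. -/
def AS (P : ASPProgram Atom) : Set (Finset Atom) :=
  {I | sat I (reduct P I) ∧ ∀ J ⊂ I, ¬ sat J (reduct P I)}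

/-- Projection of a program onto `𝒰 ∖ A`: rules with a head or negative-body atom
from `A` are dropped; in the remaining rules the atoms of `A` are removed from the
positive and double-negated bodies. -/
def projAway (P : ASPProgram Atom) (A : Finset Atom) : ASPProgram Atom :=
  (P.filter (fun r => r.neg ∩ A = ∅ ∧ r.head ∩ A = ∅)).image
    (fun r => ⟨r.head, r.pos \ A, r.neg, r.nneg \ A⟩)

/-- `R` is `A`-separated: a union of a program over `𝒰 ∖ A` and a program over `A`. -/
def ASeparated (R : ASPProgram Atom) (A : Finset Atom) : Prop :=
  ∃ R₁ R₂ : ASPProgram Atom, R = R₁ ∪ R₂ ∧ progOver R₁ Aᶜ ∧ progOver R₂ A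

/-- The defining equation of a (strong) `A`-simplification of `P` relative to `B`:
`AS(P ∪ R)_{|Ā} = AS(Q ∪ R_{|Ā})` for every `A`-separated program `R` over `B`. -/
def SimpEq (P : ASPProgram Atom) (A B : Finset Atom) (Q : ASPProgram Atom) : Prop :=
  ∀ R : ASPProgram Atom, progOver R B → ASeparated R A →
    (fun I => I \ A) '' AS (P ∪ R) = AS (Q ∪ projAway R A)

/-- The SE-models of `P`. -/
def SE (P : ASPProgram Atom) : Set (Finset Atom × Finset Atom) :=
  {p | p.1 ⊆ p.2 ∧ sat p.2 P ∧ sat p.1 (reduct P p.2)}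

/-- The (relativized) `B`-SE-models of `P`. -/
def SEB (B : Finset Atom) (P : ASPProgram Atom) : Set (Finset Atom × Finset Atom) :=
  {p | (p.1 = p.2 ∨ p.1 ⊂ p.2 ∩ B) ∧ sat p.2 P ∧
    (∀ Y' ⊂ p.2, Y' ∩ B = p.2 ∩ B → ¬ sat Y' (reduct P p.2)) ∧
    (p.1 ⊂ p.2 → ∃ X' ⊆ p.2, X' ∩ B = p.1 ∧ sat X' (reduct P p.2))}

/-- `SE^{A₁,A₂}(P)`: the `A₂`-SE-models `⟨X,Y⟩` of `P` with `Y ⊆ A₁`. -/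
def SERel (P : ASPProgram Atom) (A₁ A₂ : Finset Atom) : Set (Finset Atom × Finset Atom) :=
  {p | p ∈ SEB A₂ P ∧ p.2 ⊆ A₁}

/-- `P` satisfies `Δʳ` for `A`, `B`. -/
def DeltaR (P : ASPProgram Atom) (A B : Finset Atom) : Prop :=
  (∀ Y : Finset Atom, (Y, Y) ∈ SEB B P → A ∩ B ⊆ Y) ∧
  (∀ X Y : Finset Atom, (X, Y) ∈ SE P → (Y, Y) ∈ SEB B P → X \ A = Y \ A → X = Y) ∧
  (∀ X Y : Finset Atom, (X, Y) ∈ SEB B P → (X ∪ (Y ∩ A ∩ B), Y) ∈ SEB B P)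

/-- The family `𝓡^Y_{⟨P,A,B⟩}`. -/
def RFam (P : ASPProgram Atom) (A B Y : Finset Atom) : Set (Set (Finset Atom)) :=
  {S | ∃ A' ⊆ A, (Y ∪ A', Y ∪ A') ∈ SEB B P ∧
    S = {Z | ∃ X : Finset Atom, (X, Y ∪ A') ∈ SEB B P ∧ Z = X \ A}}

/-- `P` satisfies criterion `Ω_{A,B}`: for some `Y ⊆ 𝒰 ∖ A` the family
`𝓡^Y_{⟨P,A,B⟩}` is non-empty and has no `⊆`-least element. -/
def OmegaCrit (P : ASPProgram Atom) (A B : Finset Atom) : Prop :=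
  ∃ Y : Finset Atom, Y ⊆ Aᶜ ∧ (RFam P A B Y).Nonempty ∧
    ¬ ∃ S ∈ RFam P A B Y, ∀ T ∈ RFam P A B Y, S ⊆ T

/-- `⋂ 𝓡^Y_{⟨P,A,B⟩}`, taken to be `∅` when the family is empty. -/
def RInter (P : ASPProgram Atom) (A B Y : Finset Atom) : Set (Finset Atom) :=
  {X | (RFam P A B Y).Nonempty ∧ ∀ S ∈ RFam P A B Y, X ∈ S}

/-- The `A`-`B`-SE-models `SE^B_A(P)` of `P`. -/
def SEBA (P : ASPProgram Atom) (A B : Finset Atom) : Set (Finset Atom × Finset Atom) :=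
  {p | ∃ Y : Finset Atom, (Y, Y) ∈ SEB B P ∧ p = (Y \ A, Y \ A)} ∪
  {p | ∃ X Y : Finset Atom, (X, Y) ∈ SEB B P ∧ X ⊂ Y ∧
    (∀ Y' : Finset Atom, (Y', Y') ∈ SEB B P → Y' \ A = Y \ A →
      ∃ X' : Finset Atom, (X', Y') ∈ SEB B P ∧ X' \ A = X \ A) ∧
    p = (X \ A, Y \ A)}

end Defs

section Helpers
variable {Atom : Type} [DecidableEq Atom] [Fintype Atom]

lemma satRule_proj (r : ASPRule Atom) (C J : Finset Atom)
    (hn : r.neg ∩ C = ∅) (hh : r.head ∩ C = ∅) (hJ : J ∩ C = ∅) :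
    satRule J ⟨r.head, r.pos \ C, r.neg, r.nneg \ C⟩ ↔ satRule (J ∪ C) r := by
  rw [Finset.eq_empty_iff_forall_notMem] at hn hh hJ
  simp only [Finset.mem_inter, not_and] at hn hh hJ
  simp only [satRule, Finset.Nonempty, Finset.mem_inter, Finset.mem_union,
    Finset.mem_sdiff, Finset.subset_iff]
  constructor
  · rintro (⟨x, hx1, hx2⟩ | h)
    · exact Or.inl ⟨x, hx1, Or.inl hx2⟩
    · refine Or.inr fun hall => h fun x hx => ?_
      rcases hx with hx | hx
      · rcases hall (Or.inl hx.1) with h' | h'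
        · exact h'
        · exact absurd h' hx.2
      · rcases hall (Or.inr hx.1) with h' | h'
        · exact h'
        · exact absurd h' hx.2
  · rintro (⟨x, hx1, hx2 | hx2⟩ | h)
    · exact Or.inl ⟨x, hx1, hx2⟩
    · rcases hx1 with hx1 | hx1
      · exact absurd hx2 (hh x hx1)
      · exact absurd hx2 (hn x hx1)
    · refine Or.inr fun hall => h fun x hx => ?_
      by_cases hxC : x ∈ C
      · exact Or.inr hxC
      · rcases hx with hx | hx
        · exact Or.inl (hall (Or.inl ⟨hx, hxC⟩))
        · exact Or.inl (hall (Or.inr ⟨hx, hxC⟩))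

lemma satRule_reduct_proj (h p C J : Finset Atom)
    (hh : h ∩ C = ∅) (hJ : J ∩ C = ∅) :
    satRule J ⟨h, p \ C, ∅, ∅⟩ ↔ satRule (J ∪ C) ⟨h, p, ∅, ∅⟩ := by
  have := satRule_proj (Atom := Atom) ⟨h, p, ∅, ∅⟩ C J (by simp) hh hJ
  simpa using this

lemma sat_proj (P : ASPProgram Atom) (C J : Finset Atom) (hJ : J ∩ C = ∅) :
    sat J (projAway P C) ↔ sat (J ∪ C) P := by
  constructor
  · intro h r hr
    by_cases hc : r.neg ∩ C = ∅ ∧ r.head ∩ C = ∅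
    · have hr' : (⟨r.head, r.pos \ C, r.neg, r.nneg \ C⟩ : ASPRule Atom) ∈ projAway P C := by
        simp only [projAway, Finset.mem_image, Finset.mem_filter]
        exact ⟨r, ⟨hr, hc.1, hc.2⟩, rfl⟩
      exact (satRule_proj r C J hc.1 hc.2 hJ).mp (h _ hr')
    · -- head or neg meets C
      left
      rw [not_and_or] at hc
      rcases hc with hc | hc
      · obtain ⟨x, hx⟩ := Finset.nonempty_iff_ne_empty.mpr hc
        simp only [Finset.mem_inter] at hx
        exact ⟨x, by simp [Finset.mem_inter, Finset.mem_union, hx.1, hx.2]⟩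
      · obtain ⟨x, hx⟩ := Finset.nonempty_iff_ne_empty.mpr hc
        simp only [Finset.mem_inter] at hx
        exact ⟨x, by simp [Finset.mem_inter, Finset.mem_union, hx.1, hx.2]⟩
  · intro h r' hr'
    simp only [projAway, Finset.mem_image, Finset.mem_filter] at hr'
    obtain ⟨r, ⟨hr, hn, hhd⟩, rfl⟩ := hr'
    exact (satRule_proj r C J hn hhd hJ).mpr (h r hr)

lemma sat_reduct_iff (P : ASPProgram Atom) (I J : Finset Atom) :
    sat J (reduct P I) ↔
      ∀ r ∈ P, r.neg ∩ I = ∅ → r.nneg ⊆ I → satRule J ⟨r.head, r.pos, ∅, ∅⟩ := by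
  simp only [sat, reduct, Finset.mem_image, Finset.mem_filter]
  constructor
  · intro h r hr h1 h2
    exact h _ ⟨r, ⟨hr, h1, h2⟩, rfl⟩
  · rintro h r' ⟨r, ⟨hr, h1, h2⟩, rfl⟩
    exact h r hr h1 h2

lemma sat_reduct_proj (P : ASPProgram Atom) (C X Y : Finset Atom)
    (hX : X ∩ C = ∅) (hY : Y ∩ C = ∅) :
    sat X (reduct (projAway P C) Y) ↔ sat (X ∪ C) (reduct P (Y ∪ C)) := by
  rw [sat_reduct_iff, sat_reduct_iff]
  constructor
  · intro h r hr hneg hnneg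
    rw [Finset.eq_empty_iff_forall_notMem] at hneg
    simp only [Finset.mem_inter, Finset.mem_union, not_and, not_or] at hneg
    have hnC : r.neg ∩ C = ∅ := by
      rw [Finset.eq_empty_iff_forall_notMem]
      intro x hx
      rw [Finset.mem_inter] at hx
      exact (hneg x hx.1).2 hx.2
    have hnY : r.neg ∩ Y = ∅ := by
      rw [Finset.eq_empty_iff_forall_notMem]
      intro x hx
      rw [Finset.mem_inter] at hx
      exact (hneg x hx.1).1 hx.2
    by_cases hhd : r.head ∩ C = ∅
    · have hmem : (⟨r.head, r.pos \ C, r.neg, r.nneg \ C⟩ : ASPRule Atom) ∈ projAway P C := by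
        simp only [projAway, Finset.mem_image, Finset.mem_filter]
        exact ⟨r, ⟨hr, hnC, hhd⟩, rfl⟩
      have hsub : r.nneg \ C ⊆ Y := by
        intro x hx
        rw [Finset.mem_sdiff] at hx
        rcases Finset.mem_union.mp (hnneg hx.1) with h' | h'
        · exact h'
        · exact absurd h' hx.2
      have := h _ hmem hnY hsub
      exact (satRule_reduct_proj r.head r.pos C X hhd hX).mp this
    · left
      obtain ⟨x, hx⟩ := Finset.nonempty_iff_ne_empty.mpr hhd
      simp only [Finset.mem_inter] at hx
      exact ⟨x, by simp [Finset.mem_inter, Finset.mem_union, hx.1, hx.2]⟩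
  · intro h r' hr' hneg hnneg
    simp only [projAway, Finset.mem_image, Finset.mem_filter] at hr'
    obtain ⟨r, ⟨hr, hnC, hhd⟩, rfl⟩ := hr'
    simp only at hneg hnneg
    have hnYC : r.neg ∩ (Y ∪ C) = ∅ := by
      rw [Finset.eq_empty_iff_forall_notMem]
      intro x hx
      simp only [Finset.mem_inter, Finset.mem_union] at hx
      rcases hx.2 with h' | h'
      · rw [Finset.eq_empty_iff_forall_notMem] at hneg
        exact hneg x (Finset.mem_inter.mpr ⟨hx.1, h'⟩)
      · rw [Finset.eq_empty_iff_forall_notMem] at hnC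
        exact hnC x (Finset.mem_inter.mpr ⟨hx.1, h'⟩)
    have hsub : r.nneg ⊆ Y ∪ C := by
      intro x hx
      by_cases hxC : x ∈ C
      · exact Finset.mem_union.mpr (Or.inr hxC)
      · exact Finset.mem_union.mpr (Or.inl (hnneg (Finset.mem_sdiff.mpr ⟨hx, hxC⟩)))
    exact (satRule_reduct_proj r.head r.pos C X hhd hX).mpr (h r hr hnYC hsub)
end Helpers

section Helpers2
variable {Atom : Type} [DecidableEq Atom] [Fintype Atom]

lemma mem_SEB_diag {P : ASPProgram Atom} {B X Y : Finset Atom}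
    (h : (X, Y) ∈ SEB B P) : (Y, Y) ∈ SEB B P := by
  obtain ⟨-, h2, h3, -⟩ := h
  exact ⟨Or.inl rfl, h2, h3, fun hc => absurd hc (lt_irrefl Y)⟩

lemma ssubset_of_ssubset_inter {X Y B : Finset Atom} (h : X ⊂ Y ∩ B) : X ⊂ Y :=
  lt_of_lt_of_le h (Finset.inter_subset_left)

lemma cond2_transfer (P : ASPProgram Atom) (A B Y : Finset Atom) (hY : Y ∩ (A ∩ B) = ∅) :
    (∀ Y' ⊂ Y, Y' ∩ (B \ A) = Y ∩ (B \ A) → ¬ sat Y' (reduct (projAway P (A ∩ B)) Y)) ↔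
    (∀ Y'' ⊂ Y ∪ A ∩ B, Y'' ∩ B = (Y ∪ A ∩ B) ∩ B → ¬ sat Y'' (reduct P (Y ∪ A ∩ B))) := by
  have hYx : ∀ x ∈ Y, ¬(x ∈ A ∧ x ∈ B) := by
    intro x hx hAB
    have := Finset.ext_iff.mp hY x
    simp only [Finset.mem_inter, Finset.notMem_empty, iff_false] at this
    exact this ⟨hx, hAB.1, hAB.2⟩
  constructor
  · intro h Y'' hss htr hsat
    have hCsub : A ∩ B ⊆ Y'' := by
      intro x hx
      have h1 := Finset.ext_iff.mp htr x
      simp only [Finset.mem_inter, Finset.mem_union] at h1 hx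
      exact (h1.mpr ⟨Or.inr ⟨hx.1, hx.2⟩, hx.2⟩).1
    set Y' := Y'' \ (A ∩ B) with hY'def
    have hY'eq : Y' ∪ A ∩ B = Y'' := by
      ext x
      have hCx : (x ∈ A ∧ x ∈ B) → x ∈ Y'' := fun h => hCsub (Finset.mem_inter.mpr h)
      simp only [Finset.mem_union, Finset.mem_sdiff, Finset.mem_inter, hY'def]
      tauto
    have hss' : Y' ⊂ Y := by
      have hsub : Y' ⊆ Y := by
        intro x hx
        simp only [hY'def, Finset.mem_sdiff, Finset.mem_inter] at hx
        rcases Finset.mem_union.mp (hss.1 hx.1) with h' | h'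
        · exact h'
        · exact absurd ⟨(Finset.mem_inter.mp h').1, (Finset.mem_inter.mp h').2⟩ hx.2
      refine (Finset.ssubset_iff_of_subset hsub).mpr ?_
      obtain ⟨y, hy1, hy2⟩ := Finset.exists_of_ssubset hss
      rcases Finset.mem_union.mp hy1 with h' | h'
      · exact ⟨y, h', fun hc => hy2 (Finset.mem_sdiff.mp hc).1⟩
      · exact absurd (hCsub h') hy2
    have htr' : Y' ∩ (B \ A) = Y ∩ (B \ A) := by
      ext x
      have h1 := Finset.ext_iff.mp htr x
      simp only [Finset.mem_inter, Finset.mem_union, Finset.mem_sdiff, hY'def] at h1 ⊢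
      tauto
    refine h Y' hss' htr' ?_
    have := (sat_reduct_proj P (A ∩ B) Y' Y (by simp [hY'def, Finset.sdiff_inter_self]
      ) hY).mpr
    · apply this
      rw [hY'eq]
      exact hsat
  · intro h Y' hss htr hsat
    have hY'C : Y' ∩ (A ∩ B) = ∅ := by
      rw [Finset.eq_empty_iff_forall_notMem]
      intro x hx
      simp only [Finset.mem_inter] at hx
      exact hYx x (hss.1 hx.1) ⟨hx.2.1, hx.2.2⟩
    have hss' : Y' ∪ A ∩ B ⊂ Y ∪ A ∩ B := by
      refine (Finset.ssubset_iff_of_subset (Finset.union_subset_union_left hss.1)).mpr ?_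
      obtain ⟨y, hy1, hy2⟩ := Finset.exists_of_ssubset hss
      refine ⟨y, Finset.mem_union.mpr (Or.inl hy1), fun hc => ?_⟩
      rcases Finset.mem_union.mp hc with h' | h'
      · exact hy2 h'
      · exact hYx y hy1 ⟨Finset.mem_inter.mp h' |>.1, Finset.mem_inter.mp h' |>.2⟩
    have htr' : (Y' ∪ A ∩ B) ∩ B = (Y ∪ A ∩ B) ∩ B := by
      ext x
      have h1 := Finset.ext_iff.mp htr x
      have h2 : x ∈ Y' → x ∈ Y := fun hx => hss.1 hx
      simp only [Finset.mem_inter, Finset.mem_union, Finset.mem_sdiff] at h1 ⊢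
      tauto
    refine h (Y' ∪ A ∩ B) hss' htr' ?_
    exact (sat_reduct_proj P (A ∩ B) Y' Y hY'C hY).mp hsat

lemma diag_transfer (P : ASPProgram Atom) (A B Y : Finset Atom) (hY : Y ∩ (A ∩ B) = ∅) :
    (Y, Y) ∈ SEB (B \ A) (projAway P (A ∩ B)) ↔ (Y ∪ A ∩ B, Y ∪ A ∩ B) ∈ SEB B P := by
  constructor
  · rintro ⟨-, h2, h3, -⟩
    exact ⟨Or.inl rfl, (sat_proj P (A ∩ B) Y hY).mp h2,
      (cond2_transfer P A B Y hY).mp h3, fun hc => absurd hc (lt_irrefl (Y ∪ A ∩ B))⟩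
  · rintro ⟨-, h2, h3, -⟩
    exact ⟨Or.inl rfl, (sat_proj P (A ∩ B) Y hY).mpr h2,
      (cond2_transfer P A B Y hY).mpr h3, fun hc => absurd hc (lt_irrefl Y)⟩

end Helpers2

set_option maxHeartbeats 1000000 in

/-- if `P` satisfies `Δʳ` for `A, B` and `A′ = A ∩ B`, then
`SE^{𝒰∖A′, B∖A}(P_{|𝒰∖A′}) = SE^B(P)_{|𝒰∖A′} = SE^B_{A′}(P)`. -/
theorem stmt15 {Atom : Type} [DecidableEq Atom] [Fintype Atom]
    (P : ASPProgram Atom) (A B : Finset Atom) (hD : DeltaR P A B) :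
    SERel (projAway P (A ∩ B)) (A ∩ B)ᶜ (B \ A) =
        (fun p : Finset Atom × Finset Atom => (p.1 \ (A ∩ B), p.2 \ (A ∩ B))) ''
          SEB B P ∧
      (fun p : Finset Atom × Finset Atom => (p.1 \ (A ∩ B), p.2 \ (A ∩ B))) ''
          SEB B P = SEBA P (A ∩ B) B := by
  obtain ⟨hs1, hs2, hs3⟩ := hD
  -- forward transfer
  have fwd : ∀ X Y : Finset Atom, (X, Y) ∈ SEB B P →
      (X \ (A ∩ B), Y \ (A ∩ B)) ∈ SEB (B \ A) (projAway P (A ∩ B)) := by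
    intro X Y hmem
    have hYY := mem_SEB_diag hmem
    have hC : A ∩ B ⊆ Y := hs1 Y hYY
    have hYC : (Y \ (A ∩ B)) ∩ (A ∩ B) = ∅ := Finset.sdiff_inter_self _ _
    have hYeq : Y \ (A ∩ B) ∪ A ∩ B = Y := Finset.sdiff_union_of_subset hC
    have hdiag : (Y \ (A ∩ B), Y \ (A ∩ B)) ∈ SEB (B \ A) (projAway P (A ∩ B)) := by
      rw [diag_transfer P A B _ hYC, hYeq]
      exact hYY
    rcases hmem.1 with heq | hss
    · have heq' : X = Y := heq
      rw [heq']; exact hdiag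
    · by_cases hXY : X \ (A ∩ B) = Y \ (A ∩ B)
      · rw [hXY]; exact hdiag
      · have hsubXB : X ⊆ Y ∩ B := hss.1
        have hYAB : Y ∩ A ∩ B = A ∩ B := by
          rw [Finset.inter_assoc]
          exact Finset.inter_eq_right.mpr hC
        have h3 := hs3 X Y hmem
        rw [hYAB] at h3
        have hXne : X ∪ A ∩ B ≠ Y := by
          intro he
          apply hXY
          rw [← he]
          ext x
          simp only [Finset.mem_sdiff, Finset.mem_union, Finset.mem_inter]
          tauto
        have h3ss : X ∪ A ∩ B ⊂ Y ∩ B := by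
          rcases h3.1 with h | h
          · exact absurd h hXne
          · exact h
        have hsub1 : X \ (A ∩ B) ⊆ (Y \ (A ∩ B)) ∩ (B \ A) := by
          intro x hx
          simp only [Finset.mem_sdiff, Finset.mem_inter] at hx ⊢
          have hx2 := Finset.mem_inter.mp (hsubXB hx.1)
          tauto
        have hne1 : X \ (A ∩ B) ≠ (Y \ (A ∩ B)) ∩ (B \ A) := by
          intro heq
          have hXC : X ∪ A ∩ B = Y ∩ B := by
            ext x
            have h1 := Finset.ext_iff.mp heq x
            have h2 : x ∈ X → x ∈ Y ∩ B := fun h => hsubXB h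
            have h4 : x ∈ A ∩ B → x ∈ Y := fun h => hC h
            simp only [Finset.mem_sdiff, Finset.mem_inter, Finset.mem_union] at *
            tauto
          rw [hXC] at h3ss
          exact (Finset.ssubset_iff_subset_ne.mp h3ss).2 rfl
        have hss1 : X \ (A ∩ B) ⊂ (Y \ (A ∩ B)) ∩ (B \ A) :=
          Finset.ssubset_iff_subset_ne.mpr ⟨hsub1, hne1⟩
        have h3ssY : X ∪ A ∩ B ⊂ Y := ssubset_of_ssubset_inter h3ss
        obtain ⟨-, -, -, h34⟩ := h3
        obtain ⟨X'', hX''sub, hX''B, hX''sat⟩ := h34 h3ssY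
        have hCX'' : A ∩ B ⊆ X'' := by
          intro x hx
          have h1 := Finset.ext_iff.mp hX''B x
          simp only [Finset.mem_inter, Finset.mem_union] at *
          tauto
        refine ⟨Or.inr hss1, hdiag.2.1, hdiag.2.2.1, fun _ => ?_⟩
        refine ⟨X'' \ (A ∩ B), Finset.sdiff_subset_sdiff hX''sub (le_refl _), ?_, ?_⟩
        · ext x
          have h1 := Finset.ext_iff.mp hX''B x
          have h2 : x ∈ X → x ∈ Y ∩ B := fun h => hsubXB h
          simp only [Finset.mem_sdiff, Finset.mem_inter, Finset.mem_union] at *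
          tauto
        · rw [sat_reduct_proj P (A ∩ B) _ _ (Finset.sdiff_inter_self _ _) hYC,
            Finset.sdiff_union_of_subset hCX'', hYeq]
          exact hX''sat
  -- backward transfer
  have bwd : ∀ X Y : Finset Atom, (X, Y) ∈ SEB (B \ A) (projAway P (A ∩ B)) →
      Y ∩ (A ∩ B) = ∅ →
      ∃ X' Y', (X', Y') ∈ SEB B P ∧ X' \ (A ∩ B) = X ∧ Y' \ (A ∩ B) = Y := by
    intro X Y hmem hY
    obtain ⟨h1, h2, h3, h4⟩ := hmem
    have hdiagP : (Y ∪ A ∩ B, Y ∪ A ∩ B) ∈ SEB B P :=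
      (diag_transfer P A B Y hY).mp ⟨Or.inl rfl, h2, h3, fun hc => absurd hc (lt_irrefl Y)⟩
    have hYx : ∀ x ∈ Y, ¬(x ∈ A ∧ x ∈ B) := by
      intro x hx hAB
      have := Finset.ext_iff.mp hY x
      simp only [Finset.mem_inter, Finset.notMem_empty, iff_false] at this
      exact this ⟨hx, hAB.1, hAB.2⟩
    have hYeq : (Y ∪ A ∩ B) \ (A ∩ B) = Y := by
      ext x
      have := hYx x
      simp only [Finset.mem_sdiff, Finset.mem_union, Finset.mem_inter]
      tauto
    rcases h1 with heq | hss
    · refine ⟨Y ∪ A ∩ B, Y ∪ A ∩ B, hdiagP, ?_, hYeq⟩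
      have heq' : X = Y := heq
      rw [hYeq, heq']
    · have hXsub : X ⊆ Y ∩ (B \ A) := hss.1
      obtain ⟨X', hX'sub, hX'tr, hX'sat⟩ := h4 (ssubset_of_ssubset_inter hss)
      have hX'C : X' ∩ (A ∩ B) = ∅ := by
        rw [Finset.eq_empty_iff_forall_notMem]
        intro x hx
        simp only [Finset.mem_inter] at hx
        exact hYx x (hX'sub hx.1) ⟨hx.2.1, hx.2.2⟩
      have hsat' : sat (X' ∪ A ∩ B) (reduct P (Y ∪ A ∩ B)) :=
        (sat_reduct_proj P (A ∩ B) X' Y hX'C hY).mp hX'sat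
      have hXeq : (X ∪ A ∩ B) \ (A ∩ B) = X := by
        ext x
        have h5 : x ∈ X → x ∈ Y ∩ (B \ A) := fun h => hXsub h
        have := hYx x
        simp only [Finset.mem_sdiff, Finset.mem_union, Finset.mem_inter] at *
        tauto
      refine ⟨X ∪ A ∩ B, Y ∪ A ∩ B, ?_, hXeq, hYeq⟩
      have hfst : X ∪ A ∩ B ⊂ (Y ∪ A ∩ B) ∩ B := by
        obtain ⟨y, hy1, hy2⟩ := Finset.exists_of_ssubset hss
        simp only [Finset.mem_inter, Finset.mem_sdiff] at hy1
        refine Finset.ssubset_iff_subset_ne.mpr ⟨?_, ?_⟩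
        · intro x hx
          rcases Finset.mem_union.mp hx with h' | h'
          · have := Finset.mem_inter.mp (hXsub h')
            simp only [Finset.mem_inter, Finset.mem_union, Finset.mem_sdiff] at *
            tauto
          · simp only [Finset.mem_inter, Finset.mem_union, Finset.mem_inter] at *
            tauto
        · intro he
          have : y ∈ X ∪ A ∩ B := by
            rw [he]
            simp only [Finset.mem_inter, Finset.mem_union]
            tauto
          rcases Finset.mem_union.mp this with h' | h'
          · exact hy2 h'
          · exact (Finset.mem_inter.mp h' |>.2 |> fun hb =>
              hy1.2.2 (Finset.mem_inter.mp h' |>.1))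
      refine ⟨Or.inr hfst, hdiagP.2.1, hdiagP.2.2.1, fun _ => ?_⟩
      refine ⟨X' ∪ A ∩ B, Finset.union_subset_union_left hX'sub, ?_, hsat'⟩
      ext x
      have h5 := Finset.ext_iff.mp hX'tr x
      have h6 : x ∈ X' → x ∈ Y := fun h => hX'sub h
      have := hYx x
      simp only [Finset.mem_inter, Finset.mem_union, Finset.mem_sdiff] at *
      tauto
  have hcompl : ∀ s t : Finset Atom, s ⊆ tᶜ ↔ s ∩ t = ∅ := by
    intro s t
    simp only [Finset.subset_iff, Finset.eq_empty_iff_forall_notMem, Finset.mem_compl,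
      Finset.mem_inter, not_and]
  constructor
  · ext p
    obtain ⟨X, Y⟩ := p
    constructor
    · rintro ⟨hm, hsub⟩
      obtain ⟨X', Y', h, e1, e2⟩ := bwd X Y hm ((hcompl Y (A ∩ B)).mp hsub)
      exact ⟨(X', Y'), h, by simp [e1, e2]⟩
    · rintro ⟨⟨X', Y'⟩, hm, heq⟩
      simp only [Prod.mk.injEq] at heq
      obtain ⟨e1, e2⟩ := heq
      subst e1; subst e2
      exact ⟨fwd X' Y' hm, (hcompl _ _).mpr (Finset.sdiff_inter_self _ _)⟩
  · ext p
    constructor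
    · rintro ⟨⟨X, Y⟩, hm, rfl⟩
      rcases hm.1 with heq | hss
      · have heq' : X = Y := heq
        subst heq'
        exact Or.inl ⟨X, hm, rfl⟩
      · refine Or.inr ⟨X, Y, hm, ssubset_of_ssubset_inter hss, ?_, rfl⟩
        intro Y' hY' hYeq'
        have hC1 : A ∩ B ⊆ Y' := hs1 Y' hY'
        have hC2 : A ∩ B ⊆ Y := hs1 Y (mem_SEB_diag hm)
        have : Y' = Y := by
          ext x
          have h1 := Finset.ext_iff.mp hYeq' x
          have h2 : x ∈ A ∩ B → x ∈ Y' := fun h => hC1 h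
          have h3 : x ∈ A ∩ B → x ∈ Y := fun h => hC2 h
          simp only [Finset.mem_sdiff, Finset.mem_inter] at *
          tauto
        subst this
        exact ⟨X, hm, rfl⟩
    · rintro (⟨Y, hm, rfl⟩ | ⟨X, Y, hm, -, -, rfl⟩)
      · exact ⟨(Y, Y), hm, rfl⟩
      · exact ⟨(X, Y), hm, rfl⟩
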